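/- Let ψ : [0,∞) → ℝ be twice continuously differentiable with ψ''(t) = (3 g(t)² − 1) ψ(t) for all t ≥ 0, ψ(0) = 0, and ψ(t) → 0 as t → ∞. Then ψ is identically zero on [0,∞). -/

import Mathlib

/-!
The translation mode `φ = 1 - g²`, proportional to `g'`, solves the same equation
`y'' = (3g² - 1) y`, is positive, and decays at `∞`. Because the potential `3g² - 1` is bounded,
a solution tending to `0` has derivative tending to `0` too, so the constant Wronskian of `φ` and
`ψ` vanishes. Hence `ψ / φ` is constant on `(0, ∞)`, i.e. `ψ = c φ`, and `ψ 0 = 0 ≠ φ 0`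
forces `c = 0`.
-/

/-- The heteroclinic solution `g(t) = tanh(t/√2)` of the 1-D Allen–Cahn equation. -/
noncomputable def hetero (t : ℝ) : ℝ := Real.tanh (t / Real.sqrt 2)

open Set Filter Topology Real

def SolvesLinearODE (q : ℝ → ℝ) (s : Set ℝ) (y : ℝ → ℝ) : Prop :=
  ∀ t ∈ s, DifferentiableAt ℝ y t ∧ HasDerivAt (deriv y) (q t * y t) t

noncomputable def wronskian (y₁ y₂ : ℝ → ℝ) (t : ℝ) : ℝ :=
  y₁ t * deriv y₂ t - deriv y₁ t * y₂ t

theorem abs_deriv_le_of_abs_le {f : ℝ → ℝ} {t M B : ℝ}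
    (hf : ∀ s ∈ Icc t (t + 1), DifferentiableAt ℝ f s)
    (hf' : ∀ s ∈ Icc t (t + 1), DifferentiableAt ℝ (deriv f) s)
    (hM : ∀ s ∈ Icc t (t + 1), |f s| ≤ M) (hB : ∀ s ∈ Icc t (t + 1), |deriv (deriv f) s| ≤ B) :
    |deriv f t| ≤ 2 * M + B := by
  obtain ⟨c, hc, hfc⟩ := exists_deriv_eq_slope f (lt_add_one t)
    (fun s hs => (hf s hs).continuousAt.continuousWithinAt)
    (fun s hs => (hf s (Ioo_subset_Icc_self hs)).differentiableWithinAt)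
  have hct : Icc t c ⊆ Icc t (t + 1) := Icc_subset_Icc_right hc.2.le
  obtain ⟨d, hd, hf'd⟩ := exists_deriv_eq_slope (deriv f) hc.1
    (fun s hs => (hf' s (hct hs)).continuousAt.continuousWithinAt)
    (fun s hs => (hf' s (hct (Ioo_subset_Icc_self hs))).differentiableWithinAt)
  rw [add_sub_cancel_left, div_one] at hfc
  rw [eq_div_iff (sub_ne_zero.2 hc.1.ne')] at hf'd
  have hfc_le : |deriv f c| ≤ 2 * M := by
    rw [hfc]
    have := abs_sub (f (t + 1)) (f t)
    linarith [hM (t + 1) (right_mem_Icc.2 (by linarith)), hM t (left_mem_Icc.2 (by linarith))]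
  have hslope : |deriv (deriv f) d * (c - t)| ≤ B := by
    rw [abs_mul, abs_of_pos (sub_pos.2 hc.1)]
    have := hB d (hct (Ioo_subset_Icc_self hd))
    nlinarith [abs_nonneg (deriv (deriv f) d), hc.2]
  calc |deriv f t| = |deriv f c - deriv (deriv f) d * (c - t)| := by rw [hf'd, sub_sub_cancel]
    _ ≤ |deriv f c| + |deriv (deriv f) d * (c - t)| := abs_sub _ _
    _ ≤ 2 * M + B := add_le_add hfc_le hslope

theorem eventually_abs_le_of_tendsto_zero {f : ℝ → ℝ} (hf : Tendsto f atTop (𝓝 0)) {ε : ℝ}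
    (hε : 0 < ε) : ∀ᶠ t in atTop, |f t| ≤ ε := by
  simpa using hf.abs.eventually (ge_mem_nhds (by simpa using hε))

theorem tendsto_deriv_atTop_zero {f : ℝ → ℝ} (hf : ∀ᶠ t in atTop, DifferentiableAt ℝ f t)
    (hf' : ∀ᶠ t in atTop, DifferentiableAt ℝ (deriv f) t) (h0 : Tendsto f atTop (𝓝 0))
    (h2 : Tendsto (deriv (deriv f)) atTop (𝓝 0)) : Tendsto (deriv f) atTop (𝓝 0) := by
  refine Metric.tendsto_atTop.2 fun ε hε => ?_
  obtain ⟨N, hN⟩ := eventually_atTop.1 <| hf.and <| hf'.and <|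
    (eventually_abs_le_of_tendsto_zero h0 (by positivity : 0 < ε / 4)).and
    (eventually_abs_le_of_tendsto_zero h2 (by positivity : 0 < ε / 4))
  refine ⟨N, fun t ht => ?_⟩
  have hNs : ∀ s ∈ Icc t (t + 1), N ≤ s := fun s hs => ht.trans hs.1
  have := abs_deriv_le_of_abs_le (fun s hs => (hN s (hNs s hs)).1)
    (fun s hs => (hN s (hNs s hs)).2.1) (fun s hs => (hN s (hNs s hs)).2.2.1)
    (fun s hs => (hN s (hNs s hs)).2.2.2)
  rw [Real.dist_eq, sub_zero]
  linarith

namespace SolvesLinearODE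

variable {q : ℝ → ℝ} {s : Set ℝ} {y y₁ y₂ : ℝ → ℝ}

theorem mono {s' : Set ℝ} (hy : SolvesLinearODE q s y) (hs : s' ⊆ s) : SolvesLinearODE q s' y :=
  fun t ht => hy t (hs ht)

theorem of_contDiffOn (hs : IsOpen s) (hy : ContDiffOn ℝ 2 y s)
    (hode : ∀ t ∈ s, deriv (deriv y) t = q t * y t) : SolvesLinearODE q s y := by
  intro t ht
  have hy' : ContDiffOn ℝ 1 (deriv y) s := hy.deriv_of_isOpen hs (by norm_num)
  refine ⟨(hy.differentiableOn (by norm_num) t ht).differentiableAt (hs.mem_nhds ht), ?_⟩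
  rw [← hode t ht]
  exact ((hy'.differentiableOn one_ne_zero t ht).differentiableAt (hs.mem_nhds ht)).hasDerivAt

theorem hasDerivAt_wronskian (h₁ : SolvesLinearODE q s y₁) (h₂ : SolvesLinearODE q s y₂)
    {t : ℝ} (ht : t ∈ s) : HasDerivAt (wronskian y₁ y₂) 0 t := by
  obtain ⟨hd₁, hdd₁⟩ := h₁ t ht
  obtain ⟨hd₂, hdd₂⟩ := h₂ t ht
  exact ((hd₁.hasDerivAt.mul hdd₂).sub (hdd₁.mul hd₂.hasDerivAt)).congr_deriv (by ring)

theorem tendsto_deriv_atTop_zero {a : ℝ} (hy : SolvesLinearODE q (Ioi a) y)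
    (hq : IsBoundedUnder (· ≤ ·) atTop (norm ∘ q)) (h0 : Tendsto y atTop (𝓝 0)) :
    Tendsto (deriv y) atTop (𝓝 0) := by
  have hy' : ∀ᶠ t in atTop, DifferentiableAt ℝ y t ∧ HasDerivAt (deriv y) (q t * y t) t :=
    eventually_atTop.2 ⟨a + 1, fun t ht => hy t (by simp only [mem_Ioi]; linarith)⟩
  refine _root_.tendsto_deriv_atTop_zero (hy'.mono fun t ht => ht.1)
    (hy'.mono fun t ht => ht.2.differentiableAt) h0 ?_
  exact (isBoundedUnder_le_mul_tendsto_zero hq h0).congr' (hy'.mono fun t ht => ht.2.deriv.symm)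

/-- The Wronskian is constant, and it tends to `0` since, `q` being bounded, the derivatives of
decaying solutions decay as well. -/
theorem wronskian_eqOn_zero {a : ℝ} (h₁ : SolvesLinearODE q (Ioi a) y₁)
    (h₂ : SolvesLinearODE q (Ioi a) y₂) (hq : IsBoundedUnder (· ≤ ·) atTop (norm ∘ q))
    (hy₁ : Tendsto y₁ atTop (𝓝 0)) (hy₂ : Tendsto y₂ atTop (𝓝 0)) :
    EqOn (wronskian y₁ y₂) 0 (Ioi a) := by
  obtain ⟨C, hC⟩ := isOpen_Ioi.exists_is_const_of_deriv_eq_zero isPreconnected_Ioi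
    (fun t ht => (h₁.hasDerivAt_wronskian h₂ ht).differentiableAt.differentiableWithinAt)
    (fun t ht => (h₁.hasDerivAt_wronskian h₂ ht).deriv)
  have hlim : Tendsto (wronskian y₁ y₂) atTop (𝓝 0) := by
    show Tendsto (fun t => y₁ t * deriv y₂ t - deriv y₁ t * y₂ t) atTop (𝓝 0)
    simpa using (hy₁.mul (h₂.tendsto_deriv_atTop_zero hq hy₂)).sub
      ((h₁.tendsto_deriv_atTop_zero hq hy₁).mul hy₂)
  have hC0 : C = 0 := tendsto_nhds_unique
    (tendsto_const_nhds.congr' (eventually_atTop.2 ⟨a + 1, fun t ht =>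
      (hC t (by simp only [mem_Ioi]; linarith)).symm⟩)) hlim
  exact fun t ht => (hC t ht).trans hC0

end SolvesLinearODE

theorem exists_eqOn_const_mul_of_wronskian_eqOn_zero {s : Set ℝ} {y₁ y₂ : ℝ → ℝ}
    (hs : IsOpen s) (hs' : IsPreconnected s) (hy₁ : ∀ t ∈ s, DifferentiableAt ℝ y₁ t)
    (hy₂ : ∀ t ∈ s, DifferentiableAt ℝ y₂ t) (hne : ∀ t ∈ s, y₁ t ≠ 0)
    (hW : EqOn (wronskian y₁ y₂) 0 s) : ∃ c, EqOn y₂ (fun t => c * y₁ t) s := by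
  -- `(y₂ / y₁)' = W(y₁, y₂) / y₁ ^ 2`
  have hquot : ∀ t ∈ s, HasDerivAt (fun t => y₂ t / y₁ t) 0 t := fun t ht =>
    ((hy₂ t ht).hasDerivAt.div (hy₁ t ht).hasDerivAt (hne t ht)).congr_deriv <| by
      have := hW ht
      simp only [wronskian, Pi.zero_apply] at this
      rw [div_eq_zero_iff]
      left
      linarith
  obtain ⟨c, hc⟩ := hs.exists_is_const_of_deriv_eq_zero hs'
    (fun t ht => (hquot t ht).differentiableAt.differentiableWithinAt)
    (fun t ht => (hquot t ht).deriv)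
  exact ⟨c, fun t ht => (div_eq_iff (hne t ht)).1 (hc t ht)⟩

theorem Real.hasDerivAt_tanh (x : ℝ) : HasDerivAt tanh (1 - tanh x ^ 2) x := by
  have h : tanh = fun y => sinh y / cosh y := funext tanh_eq_sinh_div_cosh
  rw [h]
  refine ((hasDerivAt_sinh x).div (hasDerivAt_cosh x) (cosh_pos x).ne').congr_deriv ?_
  field_simp

theorem Real.one_sub_tanh_sq (x : ℝ) : 1 - tanh x ^ 2 = (cosh x ^ 2)⁻¹ := by
  rw [tanh_eq_sinh_div_cosh, div_pow, cosh_sq]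
  field_simp
  ring

theorem Real.tendsto_cosh_atTop : Tendsto cosh atTop atTop :=
  tendsto_atTop_mono (fun x => by rw [cosh_eq]; linarith [exp_pos (-x)])
    (tendsto_exp_atTop.atTop_div_const two_pos)

/-- `translationMode = √2 g'`: the zero mode of the linearized operator generated by
translating `g`. -/
noncomputable def translationMode (t : ℝ) : ℝ := 1 - hetero t ^ 2

theorem hasDerivAt_hetero (t : ℝ) : HasDerivAt hetero (translationMode t / √2) t :=
  ((hasDerivAt_tanh _).comp t ((hasDerivAt_id t).div_const √2)).congr_deriv (by
    simp [translationMode, hetero, div_eq_mul_inv])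

theorem hasDerivAt_translationMode (t : ℝ) :
    HasDerivAt translationMode (√2 * (hetero t ^ 3 - hetero t)) t := by
  refine (((hasDerivAt_hetero t).pow 2).const_sub 1).congr_deriv ?_
  have h2 : √2 ^ 2 = 2 := sq_sqrt zero_le_two
  simp only [translationMode]
  field_simp
  linear_combination (hetero t - hetero t ^ 3) * h2

theorem solvesLinearODE_translationMode :
    SolvesLinearODE (fun t => 3 * hetero t ^ 2 - 1) univ translationMode := by
  intro t _
  have hderiv : deriv translationMode = fun t => √2 * (hetero t ^ 3 - hetero t) :=
    funext fun t => (hasDerivAt_translationMode t).deriv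
  refine ⟨(hasDerivAt_translationMode t).differentiableAt, ?_⟩
  rw [hderiv]
  refine ((((hasDerivAt_hetero t).pow 3).sub (hasDerivAt_hetero t)).const_mul √2).congr_deriv ?_
  have h2 : √2 ≠ 0 := by positivity
  field_simp
  ring

theorem continuous_translationMode : Continuous translationMode :=
  continuous_iff_continuousAt.2 fun t => (hasDerivAt_translationMode t).continuousAt

theorem translationMode_pos (t : ℝ) : 0 < translationMode t :=
  sub_pos.2 (tanh_sq_lt_one _)

theorem translationMode_zero : translationMode 0 = 1 := by
  simp [translationMode, hetero]

theorem tendsto_translationMode_atTop : Tendsto translationMode atTop (𝓝 0) := by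
  have h : translationMode = fun t => (cosh (t / √2) ^ 2)⁻¹ :=
    funext fun t => one_sub_tanh_sq _
  rw [h]
  exact tendsto_inv_atTop_zero.comp <| (tendsto_pow_atTop two_ne_zero).comp <|
    tendsto_cosh_atTop.comp (tendsto_id.atTop_div_const (by positivity))

theorem isBoundedUnder_potential :
    IsBoundedUnder (· ≤ ·) atTop (norm ∘ fun t => 3 * hetero t ^ 2 - 1) :=
  isBoundedUnder_of ⟨2, fun t => by
    have h := tanh_sq_lt_one (t / √2)
    have h' := sq_nonneg (tanh (t / √2))
    simp only [Function.comp_apply, norm_eq_abs, hetero, abs_le]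
    constructor <;> linarith⟩

/-- A `C²` solution of the homogeneous linearized equation `ψ'' = (3g² − 1)ψ` on `[0,∞)`
with `ψ(0) = 0` and `ψ → 0` at `∞` vanishes identically on `[0,∞)`. -/
theorem homogeneous_solution_zero (ψ : ℝ → ℝ) (hψ : ContDiffOn ℝ 2 ψ (Set.Ici 0))
    (hode : ∀ t : ℝ, 0 ≤ t → deriv (deriv ψ) t = (3 * hetero t ^ 2 - 1) * ψ t)
    (h0 : ψ 0 = 0) (hlim : Filter.Tendsto ψ Filter.atTop (nhds 0)) :
    ∀ t : ℝ, 0 ≤ t → ψ t = 0 := by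
  have hψsol : SolvesLinearODE (fun t => 3 * hetero t ^ 2 - 1) (Ioi 0) ψ :=
    .of_contDiffOn isOpen_Ioi (hψ.mono Ioi_subset_Ici_self) fun t ht => hode t (le_of_lt ht)
  have hmode := solvesLinearODE_translationMode.mono (subset_univ (Ioi 0))
  have hW := hmode.wronskian_eqOn_zero hψsol isBoundedUnder_potential
    tendsto_translationMode_atTop hlim
  obtain ⟨c, hc⟩ := exists_eqOn_const_mul_of_wronskian_eqOn_zero isOpen_Ioi isPreconnected_Ioi
    (fun t ht => (hmode t ht).1) (fun t ht => (hψsol t ht).1)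
    (fun t _ => (translationMode_pos t).ne') hW
  have hc' : EqOn ψ (fun t => c * translationMode t) (Ici 0) :=
    hc.of_subset_closure hψ.continuousOn (continuous_translationMode.const_mul c).continuousOn
      Ioi_subset_Ici_self (closure_Ioi (0 : ℝ)).ge
  have hc0 : c = 0 := by
    simpa [h0, translationMode_zero] using (hc' self_mem_Ici).symm
  intro t ht
  simpa [hc0] using hc' ht
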